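/- For any well-tempered scoring game G and integer t: L(∫^t G) = L(G) + t·π(G) and R(∫^t G) = R(G) - t·π(G), where π(G) is the parity of G. -/

import Mathlib

/-- Well-tempered scoring game trees: an integer (final score) or a position
with lists of Left and Right options. -/
inductive WT : Type where
  | int : ℤ → WT
  | node : List WT → List WT → WT

namespace WT

/-- Left options. -/
def lopts : WT → List WT
  | int _ => []
  | node L _ => L

/-- Right options. -/
def ropts : WT → List WT
  | int _ => []
  | node _ R => R

theorem sizeOf_lt_of_mem_lopts : ∀ {G g : WT}, g ∈ G.lopts → sizeOf g < sizeOf G := by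
  intro G g h
  cases G with
  | int n => simp [lopts] at h
  | node L R =>
    simp only [lopts] at h
    have h1 := List.sizeOf_lt_of_mem h
    have h2 : sizeOf (WT.node L R) = 1 + sizeOf L + sizeOf R := by simp
    omega

theorem sizeOf_lt_of_mem_ropts : ∀ {G g : WT}, g ∈ G.ropts → sizeOf g < sizeOf G := by
  intro G g h
  cases G with
  | int n => simp [ropts] at h
  | node L R =>
    simp only [ropts] at h
    have h1 := List.sizeOf_lt_of_mem h
    have h2 : sizeOf (WT.node L R) = 1 + sizeOf L + sizeOf R := by simp
    omega

/-- Disjunctive sum of two games. -/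
def add (G H : WT) : WT :=
  match G, H with
  | int m, int n => int (m + n)
  | G, H =>
    node ((G.lopts.attach.map fun g => add g.1 H) ++ (H.lopts.attach.map fun h => add G h.1))
         ((G.ropts.attach.map fun g => add g.1 H) ++ (H.ropts.attach.map fun h => add G h.1))
termination_by sizeOf G + sizeOf H
decreasing_by
  all_goals
    first
      | (have := sizeOf_lt_of_mem_lopts g.2; omega)
      | (have := sizeOf_lt_of_mem_lopts h.2; omega)
      | (have := sizeOf_lt_of_mem_ropts g.2; omega)
      | (have := sizeOf_lt_of_mem_ropts h.2; omega)

/-- Negation of a game: swap players and negate scores. -/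
def neg : WT → WT
  | int n => int (-n)
  | node L R =>
    node ((WT.node L R).ropts.attach.map fun g => neg g.1)
         ((WT.node L R).lopts.attach.map fun g => neg g.1)
termination_by G => sizeOf G
decreasing_by
  all_goals
    first
      | exact sizeOf_lt_of_mem_lopts g.2
      | exact sizeOf_lt_of_mem_ropts g.2

def lmax : List ℤ → ℤ
  | [] => 0
  | x :: xs => xs.foldl max x

def lmin : List ℤ → ℤ
  | [] => 0
  | x :: xs => xs.foldl min x

/-- The pair (left outcome, right outcome). -/
def out : WT → ℤ × ℤ
  | int n => (n, n)
  | node L R =>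
    (lmax ((WT.node L R).lopts.attach.map fun g => (out g.1).2),
     lmin ((WT.node L R).ropts.attach.map fun g => (out g.1).1))
termination_by G => sizeOf G
decreasing_by
  all_goals
    first
      | exact sizeOf_lt_of_mem_lopts g.2
      | exact sizeOf_lt_of_mem_ropts g.2

/-- Left outcome L(G): optimal score when Left moves first. -/
def Lout (G : WT) : ℤ := G.out.1

/-- Right outcome R(G): optimal score when Right moves first. -/
def Rout (G : WT) : ℤ := G.out.2

/-- `IsWT G p` : `G` is a well-tempered game of parity `p`
(`false` = even-tempered, `true` = odd-tempered). -/
inductive IsWT : WT → Bool → Prop where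
  | int (n : ℤ) : IsWT (WT.int n) false
  | node {L R : List WT} {p : Bool} (hL : L ≠ []) (hR : R ≠ [])
      (hLp : ∀ g ∈ L, IsWT g p) (hRp : ∀ g ∈ R, IsWT g p) :
      IsWT (WT.node L R) (!p)

/-- `G` is a well-tempered game (of some parity). -/
def Wt (G : WT) : Prop := ∃ p, IsWT G p

/-- Parity, computed structurally (`false` = even-tempered, `true` = odd-tempered;
agrees with `IsWT` on well-tempered games). -/
def par : WT → Bool
  | int _ => false
  | node [] _ => true
  | node (g :: _) _ => !(par g)

/-- Final score under optimal play when Left moves last. -/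
def Lf (G : WT) : ℤ := if G.par then G.Lout else G.Rout

/-- Final score under optimal play when Right moves last. -/
def Rf (G : WT) : ℤ := if G.par then G.Rout else G.Lout

/-- `G ≲ H` : for every well-tempered `X`, `L(G+X) ≤ L(H+X)` and `R(G+X) ≤ R(H+X)`. -/
def Le (G H : WT) : Prop :=
  ∀ X : WT, X.Wt → (G.add X).Lout ≤ (H.add X).Lout ∧ (G.add X).Rout ≤ (H.add X).Rout

/-- `G ≳ H`. -/
def Ge (G H : WT) : Prop := Le H G

/-- `G ≈ H` : equivalence of scoring games. -/
def Equiv (G H : WT) : Prop :=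
  ∀ X : WT, X.Wt → (G.add X).Lout = (H.add X).Lout ∧ (G.add X).Rout = (H.add X).Rout

/-- `G` and `H` are well-tempered with the same parity. -/
def SamePar (G H : WT) : Prop := ∃ p, IsWT G p ∧ IsWT H p

/-- `G` takes values in `S`: every integer subgame lies in `S`. -/
inductive Valued (S : Set ℤ) : WT → Prop where
  | int {n : ℤ} : n ∈ S → Valued S (WT.int n)
  | node {L R : List WT} : (∀ g ∈ L, Valued S g) → (∀ g ∈ R, Valued S g) →
      Valued S (WT.node L R)

/-- `Subgame H G` : `H` is a subgame of `G`. -/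
inductive Subgame : WT → WT → Prop where
  | refl (G : WT) : Subgame G G
  | left {H G' : WT} {L R : List WT} : G' ∈ L → Subgame H G' → Subgame H (WT.node L R)
  | right {H G' : WT} {L R : List WT} : G' ∈ R → Subgame H G' → Subgame H (WT.node L R)

/-- `gap G p` : supremum of `R(H) - L(H)` over subgames `H` of `G` of parity `p`
(as an element of `WithBot ℤ`; the supremum of the empty set is `⊥ = -∞`). -/
noncomputable def gap (G : WT) (p : Bool) : WithBot ℤ :=
  sSup {x : WithBot ℤ | ∃ H : WT, Subgame H G ∧ IsWT H p ∧ x = ((H.Rout - H.Lout : ℤ) : WithBot ℤ)}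

/-- Heating by `t`. -/
def heat (t : ℤ) : WT → WT
  | int n => int n
  | node L R =>
    node ((WT.node L R).lopts.attach.map fun g => (WT.int t).add (heat t g.1))
         ((WT.node L R).ropts.attach.map fun g => (WT.int (-t)).add (heat t g.1))
termination_by G => sizeOf G
decreasing_by
  all_goals
    first
      | exact sizeOf_lt_of_mem_lopts g.2
      | exact sizeOf_lt_of_mem_ropts g.2

end WT

/-! Adding an integer `t` to a well-tempered game shifts both outcomes by `t`, and heating
replaces each Left option `G^L` by `t + ∫^t G^L` (dually for Right). When Left moves first in
`∫^t G`, the option's Right outcome is `t + R(G^L) - t·π(G^L)` by induction, and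
`π(G^L) = 1 - π(G)`, so the net shift is `t·π(G)`. -/

namespace WT

theorem lmax_map_add_const {α : Type*} (f : α → ℤ) (c : ℤ) {l : List α} (hl : l ≠ []) :
    lmax (l.map fun a => f a + c) = lmax (l.map f) + c := by
  obtain ⟨x, xs, rfl⟩ := List.exists_cons_of_ne_nil hl
  simp only [List.map_cons, lmax, List.foldl_map]
  exact List.foldl_hom (· + c) fun m y => max_add_add_right m (f y) c

theorem lmin_map_add_const {α : Type*} (f : α → ℤ) (c : ℤ) {l : List α} (hl : l ≠ []) :
    lmin (l.map fun a => f a + c) = lmin (l.map f) + c := by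
  obtain ⟨x, xs, rfl⟩ := List.exists_cons_of_ne_nil hl
  simp only [List.map_cons, lmin, List.foldl_map]
  exact List.foldl_hom (· + c) fun m y => min_add_add_right m (f y) c

@[simp]
theorem Lout_int (n : ℤ) : (int n).Lout = n := by
  simp [Lout, out]

@[simp]
theorem Rout_int (n : ℤ) : (int n).Rout = n := by
  simp [Rout, out]

theorem Lout_node (L R : List WT) : (node L R).Lout = lmax (L.map Rout) := by
  rw [Lout, out]
  exact congrArg lmax (List.attach_map_val (f := Rout))

theorem Rout_node (L R : List WT) : (node L R).Rout = lmin (R.map Lout) := by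
  rw [Rout, out]
  exact congrArg lmin (List.attach_map_val (f := Lout))

theorem int_add_int (m n : ℤ) : (int m).add (int n) = int (m + n) := by
  rw [add]

theorem int_add_node (t : ℤ) (L R : List WT) :
    (int t).add (node L R) = node (L.map (int t).add) (R.map (int t).add) := by
  rw [add]
  · simp [lopts, ropts]
  · rintro _ _ _ ⟨⟩

@[simp]
theorem heat_int (t n : ℤ) : heat t (int n) = int n := by
  rw [heat]

theorem heat_node (t : ℤ) (L R : List WT) :
    heat t (node L R) =
      node (L.map fun g => (int t).add (heat t g)) (R.map fun g => (int (-t)).add (heat t g)) := by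
  rw [heat]
  simp [lopts, ropts]

theorem IsWT.node_map {L R : List WT} {f g : WT → WT} {p : Bool} (hL : L ≠ []) (hR : R ≠ [])
    (hf : ∀ a ∈ L, IsWT (f a) p) (hg : ∀ a ∈ R, IsWT (g a) p) :
    IsWT (WT.node (L.map f) (R.map g)) (!p) :=
  .node (List.map_eq_nil_iff.not.mpr hL) (List.map_eq_nil_iff.not.mpr hR)
    (by simpa using hf) (by simpa using hg)

theorem IsWT.int_add (t : ℤ) {H : WT} {p : Bool} (h : IsWT H p) : IsWT ((WT.int t).add H) p := by
  induction h with
  | int n => rw [int_add_int]; exact .int _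
  | node hL hR _ _ ihL ihR => rw [int_add_node]; exact .node_map hL hR ihL ihR

theorem IsWT.heat (t : ℤ) {G : WT} {p : Bool} (h : IsWT G p) : IsWT (WT.heat t G) p := by
  induction h with
  | int n => rw [heat_int]; exact .int _
  | node hL hR _ _ ihL ihR =>
    rw [heat_node]
    exact .node_map hL hR (fun a ha => (ihL a ha).int_add t) (fun a ha => (ihR a ha).int_add (-t))

theorem IsWT.outcomes_int_add (t : ℤ) {H : WT} {p : Bool} (h : IsWT H p) :
    ((WT.int t).add H).Lout = H.Lout + t ∧ ((WT.int t).add H).Rout = H.Rout + t := by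
  induction h with
  | int n =>
    rw [int_add_int, Lout_int, Rout_int, Lout_int, Rout_int]
    exact ⟨add_comm t n, add_comm t n⟩
  | node hL hR _ _ ihL ihR =>
    rw [int_add_node, Lout_node, Rout_node, Lout_node, Rout_node, List.map_map, List.map_map,
      List.map_congr_left (f := Rout ∘ _) fun a ha => (ihL a ha).2,
      List.map_congr_left (f := Lout ∘ _) fun a ha => (ihR a ha).1,
      lmax_map_add_const _ _ hL, lmin_map_add_const _ _ hR]
    exact ⟨rfl, rfl⟩

end WT

/-- L(∫^t G) = L(G) + t·π(G) and R(∫^t G) = R(G) - t·π(G). -/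
theorem heat_outcomes (G : WT) (p : Bool) (hG : WT.IsWT G p) (t : ℤ) :
    (WT.heat t G).Lout = G.Lout + t * (if p then 1 else 0) ∧
    (WT.heat t G).Rout = G.Rout - t * (if p then 1 else 0) := by
  induction hG with
  | int n => simp
  | @node L R p hL hR hLp hRp ihL ihR =>
    have shift : t - t * (if p then 1 else 0) = t * (if !p then 1 else 0) := by cases p <;> simp
    have left_options : ∀ g ∈ L,
        ((WT.int t).add (WT.heat t g)).Rout = g.Rout + t * (if !p then 1 else 0) := by
      intro g hg
      rw [(((hLp g hg).heat t).outcomes_int_add t).2, (ihL g hg).2, ← shift]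
      ring
    have right_options : ∀ g ∈ R,
        ((WT.int (-t)).add (WT.heat t g)).Lout = g.Lout + -(t * (if !p then 1 else 0)) := by
      intro g hg
      rw [(((hRp g hg).heat t).outcomes_int_add (-t)).1, (ihR g hg).1, ← shift]
      ring
    rw [WT.heat_node, WT.Lout_node, WT.Rout_node, WT.Lout_node, WT.Rout_node, List.map_map,
      List.map_map, List.map_congr_left (f := WT.Rout ∘ _) left_options,
      List.map_congr_left (f := WT.Lout ∘ _) right_options,
      WT.lmax_map_add_const _ _ hL, WT.lmin_map_add_const _ _ hR, ← sub_eq_add_neg]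
    exact ⟨rfl, rfl⟩
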